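/- arXiv:2104.07057 — 6 statements merged into one kernel-verified Lean document; each statement's English description precedes it below -/
import Mathlib

section
/- Let $\Gamma$ be a simple oriented acyclic graph with vertex set $\{1,\ldots,n\}$ such that $i \to j$ in $\Gamma$ implies $i < j$. In the Hecke–Kiselman monoid $\HK_\Gamma$ (generated by idempotents $x_1,\ldots,x_n$ with $x_i x_j = x_j x_i$ when $i,j$ are not connected, and $x_i x_j x_i = x_j x_i x_j = x_i x_j$ when $i \to j$), for every subset $X = \{i_1 < i_2 < \cdots < i_j\} \subseteq \{1,\ldots,n\}$ the element $e_X = x_{i_1} x_{i_2} \cdots x_{i_j}$ is an idempotent. -/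
/-- The defining relations of the Hecke–Kiselman monoid of an oriented graph with
arrow relation `E` on `Fin n`: each generator is idempotent, non-connected generators
commute, and `x_i x_j x_i = x_j x_i x_j = x_i x_j` whenever `i → j`. -/
def hkRel {n : ℕ} (E : Fin n → Fin n → Prop) :
    FreeMonoid (Fin n) → FreeMonoid (Fin n) → Prop := fun w₁ w₂ =>
  (∃ i, w₁ = FreeMonoid.of i * FreeMonoid.of i ∧ w₂ = FreeMonoid.of i) ∨
  (∃ i j, i ≠ j ∧ ¬ E i j ∧ ¬ E j i ∧
    w₁ = FreeMonoid.of i * FreeMonoid.of j ∧ w₂ = FreeMonoid.of j * FreeMonoid.of i) ∨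
  (∃ i j, E i j ∧
    ((w₁ = FreeMonoid.of i * FreeMonoid.of j * FreeMonoid.of i ∧
      w₂ = FreeMonoid.of i * FreeMonoid.of j) ∨
     (w₁ = FreeMonoid.of j * FreeMonoid.of i * FreeMonoid.of j ∧
      w₂ = FreeMonoid.of i * FreeMonoid.of j)))

/-- The Hecke–Kiselman monoid of the oriented graph `E`. -/
def HKmonoid {n : ℕ} (E : Fin n → Fin n → Prop) : Type := (conGen (hkRel E)).Quotient

instance {n : ℕ} (E : Fin n → Fin n → Prop) : Monoid (HKmonoid E) :=
  Con.monoid _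

/-- The generator `x i` of the Hecke–Kiselman monoid. -/
def hkGen {n : ℕ} (E : Fin n → Fin n → Prop) (i : Fin n) : HKmonoid E :=
  (conGen (hkRel E)).mk' (FreeMonoid.of i)

/-- For `X ⊆ {1,…,n}`, the element `e_X = x_{i_1} ⋯ x_{i_j}` where
`X = {i_1 < ⋯ < i_j}`; `e_∅ = 1`. -/
def hkIdemElt {n : ℕ} (E : Fin n → Fin n → Prop) (X : Finset (Fin n)) : HKmonoid E :=
  ((X.sort (· ≤ ·)).map (hkGen E)).prod

/-! For `k < m` the relations give `x_m x_k x_m = x_k x_m`: by commutation if `k` and `m` are not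
connected, and by `x_m x_k x_m = x_k x_m` if `k → m` (an arrow `m → k` is excluded by acyclicity
and the order). Hence `x_m` can be absorbed from the left, `x_m w x_m = w x_m`, by any word `w` in
generators below `m`, and `e_X e_X = e_X` follows by induction on `X`, peeling off its largest
element. -/

section AbsorbingGenerators

variable {M ι : Type*} [Monoid M] (r : ι → ι → Prop) (g : ι → M)

theorem mul_prod_map_mul_eq_of_forall_rel {m : ι} (hm : IsIdempotentElem (g m))
    (habs : ∀ k, r k m → g m * g k * g m = g k * g m) :
    ∀ l : List ι, (∀ k ∈ l, r k m) → g m * (l.map g).prod * g m = (l.map g).prod * g m := by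
  intro l
  induction l using List.reverseRecOn with
  | nil => simp [hm.eq]
  | append_singleton u k ih =>
    intro hl
    have hk := habs k (hl k (by simp))
    have hu := ih fun a ha => hl a (by simp [ha])
    set P := (u.map g).prod
    simp only [List.map_append, List.map_singleton, List.prod_append, List.prod_singleton]
    calc g m * (P * g k) * g m = g m * P * (g m * g k * g m) := by rw [hk]; simp only [mul_assoc]
      _ = (g m * P * g m) * (g k * g m) := by simp only [mul_assoc]
      _ = P * (g m * g k * g m) := by rw [hu]; simp only [mul_assoc]
      _ = P * g k * g m := by rw [hk, mul_assoc]

theorem isIdempotentElem_prod_map_of_pairwise (hidem : ∀ i, IsIdempotentElem (g i))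
    (habs : ∀ k m, r k m → g m * g k * g m = g k * g m) {l : List ι} (hl : l.Pairwise r) :
    IsIdempotentElem (l.map g).prod := by
  induction l using List.reverseRecOn with
  | nil => simp [IsIdempotentElem]
  | append_singleton u m ih =>
    obtain ⟨hu, -, hum⟩ := List.pairwise_append.1 hl
    have hP := ih hu
    set P := (u.map g).prod
    have habsorb : g m * P * g m = P * g m :=
      mul_prod_map_mul_eq_of_forall_rel r g (hidem m) (habs · m) u fun k hk => hum k hk m (by simp)
    simp only [IsIdempotentElem, List.map_append, List.map_singleton, List.prod_append,
      List.prod_singleton]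
    calc P * g m * (P * g m) = P * (g m * P * g m) := by simp only [mul_assoc]
      _ = P * g m := by rw [habsorb, ← mul_assoc, hP.eq]

end AbsorbingGenerators

section HeckeKiselman

variable {n : ℕ} (E : Fin n → Fin n → Prop)

theorem mk'_eq_of_hkRel {a b : FreeMonoid (Fin n)} (h : hkRel E a b) :
    (conGen (hkRel E)).mk' a = (conGen (hkRel E)).mk' b :=
  (Con.eq _).2 (ConGen.Rel.of a b h)

theorem isIdempotentElem_hkGen (i : Fin n) : IsIdempotentElem (hkGen E i) :=
  mk'_eq_of_hkRel E (Or.inl ⟨i, rfl, rfl⟩)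

theorem hkGen_mul_comm {i j : Fin n} (hne : i ≠ j) (hij : ¬ E i j) (hji : ¬ E j i) :
    hkGen E i * hkGen E j = hkGen E j * hkGen E i :=
  mk'_eq_of_hkRel E (Or.inr (Or.inl ⟨i, j, hne, hij, hji, rfl, rfl⟩))

theorem hkGen_mul_mul_hkGen_of_arrow {i j : Fin n} (h : E i j) :
    hkGen E j * hkGen E i * hkGen E j = hkGen E i * hkGen E j :=
  mk'_eq_of_hkRel E (Or.inr (Or.inr ⟨i, j, h, Or.inr ⟨rfl, rfl⟩⟩))

theorem hkGen_mul_mul_hkGen_of_lt (hacyc : ∀ i j : Fin n, E i j → i < j) {k m : Fin n}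
    (hkm : k < m) : hkGen E m * hkGen E k * hkGen E m = hkGen E k * hkGen E m := by
  by_cases hE : E k m
  · exact hkGen_mul_mul_hkGen_of_arrow E hE
  · have hE' : ¬ E m k := fun h => (hacyc m k h).not_gt hkm
    rw [← hkGen_mul_comm E hkm.ne hE hE', mul_assoc, (isIdempotentElem_hkGen E m).eq]

end HeckeKiselman

/-- if `Γ` is acyclic with `i → j` implying `i < j`, then every `e_X`
is an idempotent of `HK_Γ`. -/
theorem eX_isIdempotent {n : ℕ} (E : Fin n → Fin n → Prop)
    (hacyc : ∀ i j : Fin n, E i j → i < j) (X : Finset (Fin n)) :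
    IsIdempotentElem (hkIdemElt E X) :=
  isIdempotentElem_prod_map_of_pairwise (· < ·) (hkGen E) (isIdempotentElem_hkGen E)
    (fun _ _ => hkGen_mul_mul_hkGen_of_lt E hacyc) X.sortedLT_sort.pairwise
end

section
/- Let $\Gamma$ be a simple oriented acyclic graph with vertex set $\{1,\ldots,n\}$ such that $i \to j$ implies $i < j$. Then the Hecke–Kiselman monoid $\HK_\Gamma$ has exactly $2^n$ idempotents, namely the elements $e_X = x_{i_1}\cdots x_{i_j}$ for subsets $X = \{i_1 < \cdots < i_j\} \subseteq \{1,\ldots,n\}$ (with $e_\emptyset = 1$), and these $2^n$ elements are pairwise distinct. -/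
/-!
When every arrow increases, `x_i w x_i = x_i w` if every letter of the word `w` is `≥ i`, and
`x_j w x_j = w x_j` if every letter is `≤ j`. By the first identity `e_X` absorbs every `x_k`,
`k ∈ X`, on the right, so `e_X` is idempotent. By the second, writing `w = a j b` with `j` a
largest letter gives `w² = (a b) w`, hence `w^(N+2) = e_Y w = e_{Y ∪ {j}}` once
`(a b)^(N+1) = e_Y`: by induction on the length, some power of `w` is `e_X` for `X` the set of
letters of `w`, and an idempotent equals all of its powers. The `e_X` are distinct because the
defining relations preserve the set of letters.
-/

lemma pow_succ_eq_pow_mul_of_mul_self_eq {M : Type*} [Monoid M] {w u : M} (h : w * w = u * w)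
    (k : ℕ) : w ^ (k + 1) = u ^ k * w := by
  induction k with
  | zero => simp
  | succ k ih => rw [pow_succ, ih, mul_assoc, h, ← mul_assoc, ← pow_succ]

namespace HKmonoid

variable {n : ℕ} {E : Fin n → Fin n → Prop}

section Relations

lemma mk'_eq_of_hkRel {w₁ w₂ : FreeMonoid (Fin n)} (h : hkRel E w₁ w₂) :
    (conGen (hkRel E)).mk' w₁ = (conGen (hkRel E)).mk' w₂ :=
  (Con.eq _).mpr (ConGen.Rel.of _ _ h)

lemma hkGen_mul_self (i : Fin n) : hkGen E i * hkGen E i = hkGen E i := by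
  have h := mk'_eq_of_hkRel (E := E) (Or.inl ⟨i, rfl, rfl⟩)
  simp only [map_mul] at h
  exact h

lemma hkGen_mul_comm {i j : Fin n} (hij : i ≠ j) (h₁ : ¬ E i j) (h₂ : ¬ E j i) :
    hkGen E i * hkGen E j = hkGen E j * hkGen E i := by
  have h := mk'_eq_of_hkRel (E := E) (Or.inr (Or.inl ⟨i, j, hij, h₁, h₂, rfl, rfl⟩))
  simp only [map_mul] at h
  exact h

lemma hkGen_braid_left {i j : Fin n} (h : E i j) :
    hkGen E i * hkGen E j * hkGen E i = hkGen E i * hkGen E j := by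
  have h := mk'_eq_of_hkRel (E := E) (Or.inr (Or.inr ⟨i, j, h, Or.inl ⟨rfl, rfl⟩⟩))
  simp only [map_mul] at h
  exact h

lemma hkGen_braid_right {i j : Fin n} (h : E i j) :
    hkGen E j * hkGen E i * hkGen E j = hkGen E i * hkGen E j := by
  have h := mk'_eq_of_hkRel (E := E) (Or.inr (Or.inr ⟨i, j, h, Or.inr ⟨rfl, rfl⟩⟩))
  simp only [map_mul] at h
  exact h

lemma hkGen_mul_hkGen_mul_hkGen_of_not_rel_left {i k : Fin n} (h : ¬ E k i) :
    hkGen E i * hkGen E k * hkGen E i = hkGen E i * hkGen E k := by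
  by_cases hik : i = k
  · rw [hik, hkGen_mul_self, hkGen_mul_self]
  by_cases h' : E i k
  · exact hkGen_braid_left h'
  · rw [mul_assoc, ← hkGen_mul_comm hik h' h, ← mul_assoc, hkGen_mul_self]

lemma hkGen_mul_hkGen_mul_hkGen_of_not_rel_right {j k : Fin n} (h : ¬ E j k) :
    hkGen E j * hkGen E k * hkGen E j = hkGen E k * hkGen E j := by
  by_cases hjk : j = k
  · rw [hjk, hkGen_mul_self, hkGen_mul_self]
  by_cases h' : E k j
  · exact hkGen_braid_right h'
  · rw [hkGen_mul_comm hjk h h', mul_assoc, hkGen_mul_self]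

end Relations

section Words

variable (E) in
def hkProd (l : List (Fin n)) : HKmonoid E :=
  (l.map (hkGen E)).prod

@[simp] lemma hkProd_nil : hkProd E [] = 1 := rfl

@[simp] lemma hkProd_cons (a : Fin n) (l : List (Fin n)) :
    hkProd E (a :: l) = hkGen E a * hkProd E l := by
  simp [hkProd]

@[simp] lemma hkProd_append (l l' : List (Fin n)) :
    hkProd E (l ++ l') = hkProd E l * hkProd E l' := by
  simp [hkProd]

lemma hkIdemElt_eq_hkProd (X : Finset (Fin n)) : hkIdemElt E X = hkProd E (X.sort (· ≤ ·)) :=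
  rfl

lemma exists_hkProd_eq (m : HKmonoid E) : ∃ w, hkProd E w = m := by
  obtain ⟨x, rfl⟩ := Con.mk'_surjective (c := conGen (hkRel E)) m
  refine ⟨FreeMonoid.toList x, ?_⟩
  induction x using FreeMonoid.recOn with
  | one => rfl
  | of_mul i x ih => rw [FreeMonoid.toList_of_mul, hkProd_cons, ih, map_mul]; rfl

lemma hkGen_mul_hkProd_mul_hkGen_of_not_rel_left {i : Fin n} {l : List (Fin n)}
    (hl : ∀ k ∈ l, ¬ E k i) :
    hkGen E i * hkProd E l * hkGen E i = hkGen E i * hkProd E l := by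
  induction l using List.reverseRecOn with
  | nil => simp [hkGen_mul_self]
  | append_singleton l k ih =>
    have ih := ih fun m hm => hl m (List.mem_append_left _ hm)
    have hk : ¬ E k i := hl k (by simp)
    simp only [hkProd_append, hkProd_cons, hkProd_nil, mul_one, ← mul_assoc]
    calc hkGen E i * hkProd E l * hkGen E k * hkGen E i
        = hkGen E i * hkProd E l * (hkGen E i * hkGen E k * hkGen E i) := by
          simp only [← mul_assoc, ih]
      _ = hkGen E i * hkProd E l * hkGen E k := by
          rw [hkGen_mul_hkGen_mul_hkGen_of_not_rel_left hk, ← mul_assoc, ih]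

lemma hkGen_mul_hkProd_mul_hkGen_of_not_rel_right {j : Fin n} {l : List (Fin n)}
    (hl : ∀ k ∈ l, ¬ E j k) :
    hkGen E j * hkProd E l * hkGen E j = hkProd E l * hkGen E j := by
  induction l with
  | nil => simp [hkGen_mul_self]
  | cons k l ih =>
    have ih := ih fun m hm => hl m (List.mem_cons_of_mem _ hm)
    have hk : ¬ E j k := hl k (by simp)
    simp only [hkProd_cons, mul_assoc] at ih ⊢
    calc hkGen E j * (hkGen E k * (hkProd E l * hkGen E j))
        = hkGen E j * hkGen E k * hkGen E j * (hkProd E l * hkGen E j) := by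
          conv_lhs => rw [← ih]
          simp only [mul_assoc]
      _ = hkGen E k * (hkProd E l * hkGen E j) := by
          rw [hkGen_mul_hkGen_mul_hkGen_of_not_rel_right hk, mul_assoc, ih]

end Words

section Ordered

variable (hE : ∀ i j, E i j → i < j)
include hE

lemma hkIdemElt_mul_hkGen_of_mem {X : Finset (Fin n)} {k : Fin n} (hk : k ∈ X) :
    hkIdemElt E X * hkGen E k = hkIdemElt E X := by
  obtain ⟨a, b, hab⟩ := List.append_of_mem ((Finset.mem_sort (· ≤ ·)).2 hk)
  have hkb : ∀ m ∈ b, k < m := by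
    have hsorted := (Finset.sortedLT_sort X).pairwise
    rw [hab] at hsorted
    exact List.pairwise_cons.mp (List.pairwise_append.mp hsorted).2.1 |>.1
  rw [hkIdemElt_eq_hkProd, hab, hkProd_append, hkProd_cons, mul_assoc,
    hkGen_mul_hkProd_mul_hkGen_of_not_rel_left fun m hm hmk => (hE m k hmk).not_gt (hkb m hm)]

lemma hkIdemElt_mul_hkProd_of_subset {X : Finset (Fin n)} {l : List (Fin n)}
    (hl : ∀ k ∈ l, k ∈ X) : hkIdemElt E X * hkProd E l = hkIdemElt E X := by
  induction l with
  | nil => simp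
  | cons k l ih =>
    rw [hkProd_cons, ← mul_assoc, hkIdemElt_mul_hkGen_of_mem hE (hl k (by simp)),
      ih fun m hm => hl m (List.mem_cons_of_mem _ hm)]

lemma isIdempotentElem_hkIdemElt (X : Finset (Fin n)) : IsIdempotentElem (hkIdemElt E X) :=
  hkIdemElt_mul_hkProd_of_subset hE fun _ hk => (Finset.mem_sort _).1 hk

lemma hkIdemElt_mul_hkGen_of_forall_le {X : Finset (Fin n)} {j : Fin n} (hX : ∀ y ∈ X, y ≤ j) :
    hkIdemElt E X * hkGen E j = hkIdemElt E (insert j X) := by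
  by_cases hj : j ∈ X
  · rw [Finset.insert_eq_of_mem hj, hkIdemElt_mul_hkGen_of_mem hE hj]
  have hsort : (insert j X).sort (· ≤ ·) = X.sort (· ≤ ·) ++ [j] := by
    have hset : (X.sort (· ≤ ·) ++ [j]).toFinset = insert j X := by
      ext; simp
    rw [← hset]
    refine (List.toFinset_sort _ ?_).2 ?_
    · exact List.nodup_append.2 ⟨Finset.sort_nodup _ _, List.nodup_singleton j,
        by rintro y hy z hz rfl; simp_all⟩
    · exact List.pairwise_append.2 ⟨Finset.pairwise_sort _ _, List.pairwise_singleton _ _,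
        fun y hy z hz => by simp only [List.mem_singleton] at hz; subst hz; simp_all⟩
  rw [hkIdemElt_eq_hkProd, hkIdemElt_eq_hkProd, hsort, hkProd_append, hkProd_cons, hkProd_nil,
    mul_one]

lemma exists_hkProd_pow_eq_hkIdemElt (w : List (Fin n)) :
    ∃ N, hkProd E w ^ (N + 1) = hkIdemElt E w.toFinset := by
  rcases eq_or_ne w [] with rfl | hw
  · exact ⟨0, by simp [hkIdemElt_eq_hkProd]⟩
  obtain ⟨j, hjw, hjmax⟩ := w.toFinset.exists_max_image id (List.toFinset_nonempty_iff w |>.2 hw)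
  obtain ⟨a, b, rfl⟩ := List.append_of_mem (List.mem_toFinset.1 hjw)
  have hle : ∀ k ∈ a ++ b, k ≤ j := fun k hk => hjmax k (by simp_all)
  have hsq : hkProd E (a ++ j :: b) * hkProd E (a ++ j :: b) =
      hkProd E (a ++ b) * hkProd E (a ++ j :: b) := by
    have hpush := hkGen_mul_hkProd_mul_hkGen_of_not_rel_right (E := E) (l := b ++ a)
      fun k hk hjk => (hE j k hjk).not_ge (hle k (by simp_all [or_comm]))
    have hpush' := congrArg (· * hkProd E b) hpush
    simp only [hkProd_append, hkProd_cons, mul_assoc] at hpush' ⊢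
    rw [hpush']
  obtain ⟨N, hN⟩ := exists_hkProd_pow_eq_hkIdemElt (a ++ b)
  refine ⟨N + 1, ?_⟩
  calc hkProd E (a ++ j :: b) ^ (N + 1 + 1)
      = hkIdemElt E (a ++ b).toFinset * hkProd E a * hkGen E j * hkProd E b := by
        rw [pow_succ_eq_pow_mul_of_mul_self_eq hsq, hN, hkProd_append, hkProd_cons]
        simp only [mul_assoc]
    _ = hkIdemElt E (insert j (a ++ b).toFinset) * hkProd E b := by
        rw [hkIdemElt_mul_hkProd_of_subset hE (by simp_all),
          hkIdemElt_mul_hkGen_of_forall_le hE (by simpa using hle)]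
    _ = hkIdemElt E (a ++ j :: b).toFinset := by
        rw [hkIdemElt_mul_hkProd_of_subset hE (by simp_all)]
        congr 1
        ext; simp
termination_by w.length

lemma isIdempotentElem_iff_exists_eq_hkIdemElt (m : HKmonoid E) :
    IsIdempotentElem m ↔ ∃ X, m = hkIdemElt E X := by
  refine ⟨fun hm => ?_, fun ⟨X, hX⟩ => hX ▸ isIdempotentElem_hkIdemElt hE X⟩
  obtain ⟨w, rfl⟩ := exists_hkProd_eq m
  obtain ⟨N, hN⟩ := exists_hkProd_pow_eq_hkIdemElt hE w
  exact ⟨w.toFinset, (hm.pow_succ_eq N).symm.trans hN⟩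

end Ordered

section Content

lemma toFinset_toList_eq_of_hkRel {w₁ w₂ : FreeMonoid (Fin n)} (h : hkRel E w₁ w₂) :
    w₁.toList.toFinset = w₂.toList.toFinset := by
  rcases h with ⟨i, rfl, rfl⟩ | ⟨i, j, -, -, -, rfl, rfl⟩ | ⟨i, j, -, ⟨rfl, rfl⟩ | ⟨rfl, rfl⟩⟩ <;>
    ext <;> simp <;> tauto

lemma freeMonoidLift_insert_smul (w : FreeMonoid (Fin n)) (S : Finset (Fin n)) :
    FreeMonoid.lift (M := Function.End (Finset (Fin n))) insert w • S =
      w.toList.toFinset ∪ S := by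
  induction w using FreeMonoid.recOn with
  | one => simp
  | of_mul i w ih =>
    rw [FreeMonoid.toList_of_mul, map_mul, mul_smul, ih, List.toFinset_cons, Finset.insert_union]
    rfl

variable (E) in
def insertHom : HKmonoid E →* Function.End (Finset (Fin n)) :=
  Con.lift _ (FreeMonoid.lift (M := Function.End (Finset (Fin n))) insert) <|
    Con.conGen_le.2 fun w₁ w₂ h => funext fun S => by
      change FreeMonoid.lift (M := Function.End (Finset (Fin n))) insert w₁ • S =
        FreeMonoid.lift (M := Function.End (Finset (Fin n))) insert w₂ • S
      rw [freeMonoidLift_insert_smul, freeMonoidLift_insert_smul, toFinset_toList_eq_of_hkRel h]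

lemma insertHom_hkProd (l : List (Fin n)) (S : Finset (Fin n)) :
    insertHom E (hkProd E l) • S = l.toFinset ∪ S := by
  induction l with
  | nil => simp
  | cons a l ih =>
    rw [hkProd_cons, map_mul, mul_smul, ih, List.toFinset_cons, Finset.insert_union]
    rfl

lemma hkIdemElt_injective : Function.Injective (hkIdemElt E) := fun X Y h => by
  have h := congrArg (insertHom E · • (∅ : Finset (Fin n))) h
  simpa only [hkIdemElt_eq_hkProd, insertHom_hkProd, Finset.sort_toFinset, Finset.union_empty]
    using h

end Content

end HKmonoid

/-- for an acyclic graph with `i → j ⟹ i < j`, the idempotents of `HK_Γ`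
are exactly the `2^n` pairwise distinct elements `e_X`, `X ⊆ {1,…,n}`. -/
theorem hk_idempotents_eq_eX {n : ℕ} (E : Fin n → Fin n → Prop)
    (hacyc : ∀ i j : Fin n, E i j → i < j) :
    Function.Injective (hkIdemElt E) ∧
    (∀ m : HKmonoid E, IsIdempotentElem m ↔ ∃ X : Finset (Fin n), m = hkIdemElt E X) ∧
    Set.ncard {m : HKmonoid E | IsIdempotentElem m} = 2 ^ n := by
  have hidem := HKmonoid.isIdempotentElem_iff_exists_eq_hkIdemElt hacyc
  have hset : {m : HKmonoid E | IsIdempotentElem m} = Set.range (hkIdemElt E) := by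
    ext m
    simp [hidem, eq_comm]
  refine ⟨HKmonoid.hkIdemElt_injective, hidem, ?_⟩
  rw [hset, Set.ncard_range_of_injective HKmonoid.hkIdemElt_injective]
  simp
end

section
/- For any finite oriented graph $\Gamma$, there is a bijection between the set of idempotents of the Hecke–Kiselman monoid $\HK_\Gamma$ and the set of full (induced) subgraphs of $\Gamma$ that contain no oriented cycle. -/
/-!
The bijection sends an idempotent to its support, the set of generators occurring in any word
representing it.

The support of an idempotent `e` is acyclic: `HK_Γ` acts on `ℕ^n` by letting `x_i` raise the
`i`-th coordinate above the coordinates of all successors of `i`. These maps are inflationary, so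
the point `e • 0`, which `e` fixes, is fixed by every generator in the support of `e`; hence it
strictly decreases along every arrow of the support.

Order an acyclic `V` so that no arrow points backwards. The product `e_V` of the generators in this
order absorbs every `x_v`, `v ∈ V`, on the right, so it is an idempotent with support `V`.
Conversely, let `e` be idempotent with support `V` and let `b` be the last vertex, a sink of `V`.
Then `x_b` absorbs all but one occurrence of itself in `e * e`, which gives `e = e' * x_b * e` for
the idempotent `e'` obtained from `e` by deleting `x_b`. By induction `e' = e_{V ∖ b}`, so
`e = e_V * e = e_V`.
-/

section AcyclicOn

variable {α : Type*} {r : α → α → Prop} {V W : Finset α}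

def AcyclicOn (r : α → α → Prop) (V : Finset α) : Prop :=
  ∀ v, ¬ Relation.TransGen (fun a b => a ∈ V ∧ b ∈ V ∧ r a b) v v

theorem AcyclicOn.mono (h : AcyclicOn r V) (hWV : W ⊆ V) : AcyclicOn r W :=
  fun v hv => h v <|
    Relation.TransGen.mono (fun _ _ hab => ⟨hWV hab.1, hWV hab.2.1, hab.2.2⟩) _ _ hv

theorem acyclicOn_of_lt {β : Type*} [Preorder β] (f : α → β)
    (hf : ∀ a ∈ V, ∀ b ∈ V, r a b → f b < f a) : AcyclicOn r V := by
  have key : ∀ a b, Relation.TransGen (fun a b => a ∈ V ∧ b ∈ V ∧ r a b) a b → f b < f a := by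
    intro a b hab
    induction hab with
    | single hab => exact hf _ hab.1 _ hab.2.1 hab.2.2
    | tail _ hbc ih => exact (hf _ hbc.1 _ hbc.2.1 hbc.2.2).trans ih
  exact fun v hv => lt_irrefl _ (key v v hv)

theorem AcyclicOn.exists_sink (h : AcyclicOn r V) (hne : V.Nonempty) :
    ∃ b ∈ V, ∀ i ∈ V, ¬ r b i := by
  let R := Relation.TransGen fun a b => a ∈ V ∧ b ∈ V ∧ r a b
  have : IsStrictOrder α (flip R) := { irrefl := h, trans := fun _ _ _ hab hbc => hbc.trans hab }
  obtain ⟨⟨b, hb⟩, -, hmin⟩ := (V.finite_toSet.wellFoundedOn (r := flip R)).has_min Set.univ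
    ⟨⟨_, hne.choose_spec⟩, trivial⟩
  exact ⟨b, hb, fun i hi hbi => hmin ⟨i, hi⟩ trivial (.single ⟨hb, hi, hbi⟩)⟩

theorem AcyclicOn.exists_sorted_list [DecidableEq α] (h : AcyclicOn r V) :
    ∃ l : List α, l.Nodup ∧ l.Pairwise (fun a b => ¬ r b a) ∧ l.toFinset = V := by
  induction V using Finset.strongInduction with
  | H V ih =>
    rcases V.eq_empty_or_nonempty with rfl | hne
    · exact ⟨[], List.nodup_nil, List.Pairwise.nil, rfl⟩
    obtain ⟨b, hb, hsink⟩ := h.exists_sink hne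
    obtain ⟨l, hnodup, hsorted, hl⟩ :=
      ih _ (Finset.erase_ssubset hb) (h.mono (Finset.erase_subset b V))
    have hbl : b ∉ l := by simp [← List.mem_toFinset, hl]
    refine ⟨l ++ [b], ?_, ?_, ?_⟩
    · simpa [List.nodup_append] using ⟨hnodup, fun a ha hab => hbl (hab ▸ ha)⟩
    · refine List.pairwise_append.2 ⟨hsorted, List.pairwise_singleton _ _, ?_⟩
      simp only [List.mem_singleton, forall_eq]
      exact fun a ha => hsink a (Finset.mem_of_mem_erase (hl ▸ List.mem_toFinset.2 ha))
    · simp [hl, Finset.insert_erase hb]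

end AcyclicOn

namespace HKmonoid

variable {n : ℕ} {E : Fin n → Fin n → Prop}

structure IsHKFamily {M : Type*} [Monoid M] (E : Fin n → Fin n → Prop) (f : Fin n → M) :
    Prop where
  mul_self : ∀ i, f i * f i = f i
  mul_comm : ∀ ⦃i j⦄, i ≠ j → ¬ E i j → ¬ E j i → f i * f j = f j * f i
  mul_mul_self_of_edge : ∀ ⦃i j⦄, E i j → f i * f j * f i = f i * f j
  mul_mul_of_edge : ∀ ⦃i j⦄, E i j → f j * f i * f j = f i * f j

theorem isHKFamily_hkGen : IsHKFamily E (hkGen E) := by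
  have rel : ∀ {x y}, hkRel E x y → (conGen (hkRel E)).mk' x = (conGen (hkRel E)).mk' y :=
    fun h => (Con.eq _).2 (.of _ _ h)
  refine ⟨fun i => ?_, fun i j hij h₁ h₂ => ?_, fun i j h => ?_, fun i j h => ?_⟩ <;> apply rel
  exacts [Or.inl ⟨i, rfl, rfl⟩, Or.inr (Or.inl ⟨i, j, hij, h₁, h₂, rfl, rfl⟩),
    Or.inr (Or.inr ⟨i, j, h, Or.inl ⟨rfl, rfl⟩⟩), Or.inr (Or.inr ⟨i, j, h, Or.inr ⟨rfl, rfl⟩⟩)]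

variable (E) in
def word (l : List (Fin n)) : HKmonoid E := (l.map (hkGen E)).prod

@[simp] theorem word_nil : word E [] = 1 := rfl

@[simp] theorem word_cons (i : Fin n) (l : List (Fin n)) :
    word E (i :: l) = hkGen E i * word E l := List.prod_cons

@[simp] theorem word_append (l₁ l₂ : List (Fin n)) :
    word E (l₁ ++ l₂) = word E l₁ * word E l₂ := by
  simp [word]

@[simp] theorem word_singleton (i : Fin n) : word E [i] = hkGen E i := by
  simp

theorem exists_word_eq (m : HKmonoid E) : ∃ l, word E l = m := by
  obtain ⟨w, rfl⟩ := Con.mk'_surjective m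
  refine ⟨w.toList, ?_⟩
  induction w using FreeMonoid.inductionOn' with
  | one => rfl
  | of_mul i w ih => rw [FreeMonoid.toList_of_mul, word_cons, ih, map_mul]; rfl

section lift

variable {M : Type*} [Monoid M] {f : Fin n → M}

def lift (hf : IsHKFamily E f) : HKmonoid E →* M :=
  (conGen (hkRel E)).lift (FreeMonoid.lift f) <| Con.conGen_le.2 fun x y h => by
    rw [Con.ker_rel]
    rcases h with ⟨i, rfl, rfl⟩ | ⟨i, j, hij, h₁, h₂, rfl, rfl⟩ | ⟨i, j, h, ⟨rfl, rfl⟩ | ⟨rfl, rfl⟩⟩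
    · simp [hf.mul_self]
    · simp [hf.mul_comm hij h₁ h₂]
    · simp [hf.mul_mul_self_of_edge h]
    · simp [hf.mul_mul_of_edge h]

@[simp]
theorem lift_hkGen (hf : IsHKFamily E f) (i : Fin n) : lift hf (hkGen E i) = f i :=
  FreeMonoid.lift_eval_of f i

theorem lift_word (hf : IsHKFamily E f) (l : List (Fin n)) :
    lift hf (word E l) = (l.map f).prod := by
  simp [word, map_list_prod, Function.comp_def]

theorem IsHKFamily.update_one (hf : IsHKFamily E f) (b : Fin n) :
    IsHKFamily E (Function.update f b 1) where
  mul_self i := by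
    by_cases hi : i = b <;> simp [hi, hf.mul_self]
  mul_comm i j hij h₁ h₂ := by
    by_cases hi : i = b <;> by_cases hj : j = b <;> simp [hi, hj, hf.mul_comm hij h₁ h₂]
  mul_mul_self_of_edge i j h := by
    by_cases hi : i = b <;> by_cases hj : j = b <;>
      simp [hi, hj, hf.mul_self, hf.mul_mul_self_of_edge h]
  mul_mul_of_edge i j h := by
    by_cases hi : i = b <;> by_cases hj : j = b <;>
      simp [hi, hj, hf.mul_self, hf.mul_mul_of_edge h]

end lift

-- Typed as `Function.End` so that `lift` and its lemmas see the monoid structure.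
def insertEnd (i : Fin n) : Function.End (Finset (Fin n)) := insert i

theorem isHKFamily_insertEnd : IsHKFamily E (insertEnd (n := n)) where
  mul_self i := funext fun s => Finset.insert_idem i s
  mul_comm i j _ _ _ := funext fun s => Finset.insert_comm i j s
  mul_mul_self_of_edge i j _ := funext fun s => by
    change insert i (insert j (insert i s)) = insert i (insert j s)
    rw [Finset.insert_comm j i, Finset.insert_idem]
  mul_mul_of_edge i j _ := funext fun s => by
    change insert j (insert i (insert j s)) = insert i (insert j s)
    rw [Finset.insert_comm i j, Finset.insert_idem]

/-- The set of generators occurring in any word representing `m`. -/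
def support (m : HKmonoid E) : Finset (Fin n) := lift isHKFamily_insertEnd m ∅

@[simp]
theorem support_word (l : List (Fin n)) : support (word E l) = l.toFinset := by
  rw [support, lift_word]
  induction l with
  | nil => rfl
  | cons i l ih =>
    change insert i ((l.map insertEnd).prod ∅) = _
    rw [ih, List.toFinset_cons]

theorem exists_eq_mul_hkGen_mul {m : HKmonoid E} {i : Fin n} (hi : i ∈ support m) :
    ∃ p q, m = p * hkGen E i * q := by
  obtain ⟨l, rfl⟩ := exists_word_eq m
  obtain ⟨s, t, rfl⟩ := List.append_of_mem (List.mem_toFinset.1 (support_word (E := E) l ▸ hi))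
  exact ⟨word E s, word E t, by simp [mul_assoc]⟩

variable (E) in
def eraseGen (b : Fin n) : HKmonoid E →* HKmonoid E := lift (isHKFamily_hkGen.update_one b)

@[simp] theorem eraseGen_word (b : Fin n) (l : List (Fin n)) :
    eraseGen E b (word E l) = word E (l.filter (· ≠ b)) := by
  rw [eraseGen, lift_word]
  induction l with
  | nil => rfl
  | cons i l ih => rcases eq_or_ne i b with rfl | hi <;> simp [*]

theorem support_eraseGen (b : Fin n) (m : HKmonoid E) :
    support (eraseGen E b m) = (support m).erase b := by
  obtain ⟨l, rfl⟩ := exists_word_eq m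
  simp [List.toFinset_filter, Finset.filter_ne']

theorem hkGen_mul_word_mul_hkGen {b : Fin n} {u : List (Fin n)} (hu : ∀ i ∈ u, ¬ E b i) :
    hkGen E b * word E u * hkGen E b = word E u * hkGen E b := by
  induction u using List.reverseRecOn with
  | nil => simpa using isHKFamily_hkGen.mul_self b
  | append_singleton u i ih =>
    have ih := ih fun j hj => hu j (by simp [hj])
    have hbi : ¬ E b i := hu i (by simp)
    simp only [word_append, word_singleton, ← mul_assoc] at ih ⊢
    by_cases hib : i = b
    · subst hib
      simp only [mul_assoc, isHKFamily_hkGen.mul_self]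
      simpa only [← mul_assoc] using ih
    by_cases hE : E i b
    · simp only [mul_assoc]
      rw [← isHKFamily_hkGen.mul_mul_of_edge hE]
      simp only [← mul_assoc, ih]
    · simp only [mul_assoc]
      rw [isHKFamily_hkGen.mul_comm hib hE hbi]
      simp only [← mul_assoc, ih]

theorem word_mul_hkGen_eq_filter {b : Fin n} {u : List (Fin n)} (hu : ∀ i ∈ u, ¬ E b i) :
    word E u * hkGen E b = word E (u.filter (· ≠ b)) * hkGen E b := by
  induction u with
  | nil => rfl
  | cons i u ih =>
    rw [word_cons, mul_assoc, ih fun j hj => hu j (by simp [hj])]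
    by_cases hib : i = b
    · subst hib
      rw [← mul_assoc,
        hkGen_mul_word_mul_hkGen fun j hj => hu j (by simp [List.mem_of_mem_filter hj])]
      simp
    · simp [hib, mul_assoc]

theorem word_mul_hkGen_of_mem {l : List (Fin n)} (hl : l.Pairwise fun a b => ¬ E b a) {i : Fin n}
    (hi : i ∈ l) : word E l * hkGen E i = word E l := by
  induction l using List.reverseRecOn with
  | nil => simp at hi
  | append_singleton l b ih =>
    rw [List.pairwise_append] at hl
    simp only [word_append, word_singleton]
    by_cases hib : i = b
    · rw [hib, mul_assoc, isHKFamily_hkGen.mul_self]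
    have hil : i ∈ l := by simpa [hib] using hi
    have hbi : ¬ E b i := hl.2.2 i hil b (List.mem_singleton_self b)
    have ih := ih hl.1 hil
    by_cases hE : E i b
    · calc word E l * hkGen E b * hkGen E i = word E l * hkGen E i * hkGen E b * hkGen E i := by
            rw [ih]
        _ = word E l * (hkGen E i * hkGen E b * hkGen E i) := by simp only [mul_assoc]
        _ = word E l * hkGen E b := by
            rw [isHKFamily_hkGen.mul_mul_self_of_edge hE, ← mul_assoc, ih]
    · rw [mul_assoc, ← isHKFamily_hkGen.mul_comm hib hE hbi, ← mul_assoc, ih]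

theorem word_mul_word_of_subset {l u : List (Fin n)} (hl : l.Pairwise fun a b => ¬ E b a)
    (hu : ∀ i ∈ u, i ∈ l) : word E l * word E u = word E l := by
  induction u using List.reverseRecOn with
  | nil => simp
  | append_singleton u i ih =>
    rw [word_append, word_singleton, ← mul_assoc, ih fun j hj => hu j (by simp [hj]),
      word_mul_hkGen_of_mem hl (hu i (by simp))]

theorem isIdempotentElem_word {l : List (Fin n)} (hl : l.Pairwise fun a b => ¬ E b a) :
    IsIdempotentElem (word E l) :=
  word_mul_word_of_subset hl fun _ => id

theorem eraseGen_mul_hkGen_mul_eq_self {m : HKmonoid E} (hm : IsIdempotentElem m) {b : Fin n}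
    (hb : b ∈ support m) (hsink : ∀ i ∈ support m, ¬ E b i) :
    eraseGen E b m * hkGen E b * m = m := by
  obtain ⟨r, rfl⟩ := exists_word_eq m
  simp only [support_word, List.mem_toFinset] at hb hsink
  obtain ⟨p, q, rfl⟩ := List.append_of_mem hb
  set m := word E (p ++ b :: q)
  set p' := p.filter (· ≠ b)
  set q' := q.filter (· ≠ b)
  have hp' : ∀ i ∈ p', ¬ E b i := fun i hi => hsink i (by simp [List.mem_of_mem_filter hi])
  have hm_eq : m = word E p' * hkGen E b * word E q := by
    rw [← word_mul_hkGen_eq_filter fun i hi => hsink i (by simp [hi])]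
    simp [m, mul_assoc]
  have herase : eraseGen E b m = word E p' * word E q' := by
    rw [eraseGen_word, List.filter_append, List.filter_cons_of_neg (by simp), word_append]
  -- As `b` is a sink, `x_b` absorbs every other occurrence of `b` in `m * m`.
  have hmid : hkGen E b * word E (q ++ p') * hkGen E b = word E (q' ++ p') * hkGen E b := by
    rw [← word_cons, word_mul_hkGen_eq_filter, List.filter_cons_of_neg (by simp),
      List.filter_append, List.filter_filter]
    · simp [q', p']
    · intro i hi
      exact hsink i (by simp [p'] at hi ⊢; tauto)
  calc eraseGen E b m * hkGen E b * m
      = word E p' * word E q' * (hkGen E b * word E p' * hkGen E b) * word E q := by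
        rw [herase, hm_eq]; simp only [mul_assoc]
    _ = word E p' * (hkGen E b * word E (q ++ p') * hkGen E b) * word E q := by
        rw [hkGen_mul_word_mul_hkGen hp', hmid]; simp only [word_append, mul_assoc]
    _ = m * m := by rw [hm_eq]; simp only [word_append, mul_assoc]
    _ = m := hm

theorem eq_word_of_isIdempotentElem (hirr : ∀ i, ¬ E i i) {l : List (Fin n)} (hnodup : l.Nodup)
    (hl : l.Pairwise fun a b => ¬ E b a) {m : HKmonoid E} (hm : IsIdempotentElem m)
    (hsupp : support m = l.toFinset) : m = word E l := by
  induction l using List.reverseRecOn generalizing m with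
  | nil =>
    obtain ⟨r, rfl⟩ := exists_word_eq m
    rw [support_word, List.toFinset_nil, List.toFinset_eq_empty_iff] at hsupp
    rw [hsupp]
  | append_singleton l b ih =>
    obtain ⟨hl_nodup, -, hbl⟩ := List.nodup_append.1 hnodup
    obtain ⟨hl_sorted, -, hsink_l⟩ := List.pairwise_append.1 hl
    have hb : b ∈ support m := by simp [hsupp]
    have hsink : ∀ i ∈ support m, ¬ E b i := by
      intro i hi
      rcases List.mem_append.1 (List.mem_toFinset.1 (hsupp ▸ hi)) with hil | hib
      · exact hsink_l i hil b (List.mem_singleton_self b)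
      · exact List.eq_of_mem_singleton hib ▸ hirr b
    have herase : eraseGen E b m = word E l := by
      refine ih hl_nodup hl_sorted (hm.map (eraseGen E b)) ?_
      ext i
      rw [support_eraseGen, hsupp]
      simp only [Finset.mem_erase, List.mem_toFinset, List.mem_append, List.mem_singleton]
      exact ⟨fun ⟨hib, h⟩ => h.resolve_right hib,
        fun h => ⟨fun hib => hbl i h b (List.mem_singleton_self b) hib, Or.inl h⟩⟩
    obtain ⟨r, rfl⟩ := exists_word_eq m
    calc word E r = eraseGen E b (word E r) * hkGen E b * word E r :=
          (eraseGen_mul_hkGen_mul_eq_self hm hb hsink).symm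
      _ = word E (l ++ [b]) * word E r := by rw [herase, word_append, word_singleton]
      _ = word E (l ++ [b]) :=
          word_mul_word_of_subset hl fun i hi => by
            rwa [← List.mem_toFinset, ← hsupp, support_word, List.mem_toFinset]

section raise

variable {i j s : Fin n} {a b : Fin n → ℕ}

variable (E) in
open Classical in
noncomputable def succSup (i : Fin n) (a : Fin n → ℕ) : ℕ :=
  (Finset.univ.filter (E i)).sup fun s => a s + 1

theorem lt_succSup (h : E i s) : a s < succSup E i a := by
  classical
  exact Nat.lt_of_succ_le (Finset.le_sup (f := fun s => a s + 1) (by simpa using h))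

theorem succSup_mono (h : a ≤ b) : succSup E i a ≤ succSup E i b := by
  classical
  exact Finset.sup_mono_fun fun s _ => Nat.succ_le_succ (h s)

theorem succSup_congr (h : ∀ s, E i s → a s = b s) : succSup E i a = succSup E i b := by
  classical
  exact Finset.sup_congr rfl fun s hs => by rw [h s (by simpa using hs)]

variable (E) in
noncomputable def raise (i : Fin n) : Function.End (Fin n → ℕ) := fun a =>
  Function.update a i (max (a i) (succSup E i a))

theorem raise_apply_self : raise E i a i = max (a i) (succSup E i a) :=
  Function.update_self ..

theorem raise_apply_of_ne {k : Fin n} (h : k ≠ i) : raise E i a k = a k :=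
  Function.update_of_ne h ..

theorem le_raise (i : Fin n) (a : Fin n → ℕ) : a ≤ raise E i a := by
  intro k
  rcases eq_or_ne k i with rfl | hk
  · exact raise_apply_self (E := E) ▸ le_max_left _ _
  · exact (raise_apply_of_ne hk).ge

theorem succSup_raise_of_not_edge (h : ¬ E j i) : succSup E j (raise E i a) = succSup E j a :=
  succSup_congr fun _ hs => raise_apply_of_ne fun hsi => h (hsi ▸ hs)

theorem raise_raise_apply_of_ne (hji : ¬ E j i) (hs : s ≠ i) :
    raise E j (raise E i a) s = raise E j a s := by
  rcases eq_or_ne s j with rfl | hsj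
  · rw [raise_apply_self, raise_apply_self, raise_apply_of_ne hs, succSup_raise_of_not_edge hji]
  · rw [raise_apply_of_ne hsj, raise_apply_of_ne hsj, raise_apply_of_ne hs]

theorem isHKFamily_raise (hsimple : ∀ i j : Fin n, E i j → i ≠ j ∧ ¬ E j i) :
    IsHKFamily E (raise E) := by
  have hirr : ∀ i, ¬ E i i := fun i h => (hsimple i i h).1 rfl
  refine ⟨fun i => ?_, fun i j hij h₁ h₂ => ?_, fun i j h => ?_, fun i j h => ?_⟩ <;> funext a k
  · change raise E i (raise E i a) k = raise E i a k
    rcases eq_or_ne k i with rfl | hki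
    · rw [raise_apply_self, succSup_raise_of_not_edge (hirr k), raise_apply_self]
      omega
    · rw [raise_apply_of_ne hki, raise_apply_of_ne hki]
  · change raise E i (raise E j a) k = raise E j (raise E i a) k
    rcases eq_or_ne k i with rfl | hki
    · rw [raise_raise_apply_of_ne h₁ hij, raise_apply_of_ne hij]
    · rw [raise_apply_of_ne hki, raise_raise_apply_of_ne h₂ hki]
  · change raise E i (raise E j (raise E i a)) k = raise E i (raise E j a) k
    obtain ⟨hij, hji⟩ := hsimple i j h
    rcases eq_or_ne k i with rfl | hki
    · have hsup : succSup E k (raise E j (raise E k a)) = succSup E k (raise E j a) :=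
        succSup_congr fun s hs => raise_raise_apply_of_ne hji fun hsk => hirr k (hsk ▸ hs)
      have hmono : succSup E k a ≤ succSup E k (raise E j a) := succSup_mono (le_raise j a)
      rw [raise_apply_self, raise_apply_self, hsup, raise_apply_of_ne hij, raise_apply_of_ne hij,
        raise_apply_self]
      omega
    · rw [raise_apply_of_ne hki, raise_apply_of_ne hki, raise_raise_apply_of_ne hji hki]
  · change raise E j (raise E i (raise E j a)) k = raise E i (raise E j a) k
    obtain ⟨hij, hji⟩ := hsimple i j h
    rcases eq_or_ne k j with rfl | hkj
    · rw [raise_apply_self, raise_apply_of_ne hij.symm, succSup_raise_of_not_edge hji,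
        succSup_raise_of_not_edge (hirr k), raise_apply_self]
      omega
    · rw [raise_apply_of_ne hkj]

end raise

section inflationary

variable {α : Type*} [PartialOrder α] {f : Fin n → Function.End α}

theorem IsHKFamily.le_lift_apply (hf : IsHKFamily E f) (hinfl : ∀ i a, a ≤ f i a)
    (m : HKmonoid E) (a : α) : a ≤ lift hf m a := by
  obtain ⟨l, rfl⟩ := exists_word_eq m
  rw [lift_word]
  induction l generalizing a with
  | nil => exact le_rfl
  | cons i l ih => exact (ih a).trans (hinfl i _)

theorem IsHKFamily.apply_eq_of_mem_support (hf : IsHKFamily E f) (hinfl : ∀ i a, a ≤ f i a)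
    {m : HKmonoid E} {a : α} (ha : lift hf m a = a) {i : Fin n} (hi : i ∈ support m) :
    f i a = a := by
  obtain ⟨p, q, rfl⟩ := exists_eq_mul_hkGen_mul hi
  replace ha : lift hf p (f i (lift hf q a)) = a := by
    rw [map_mul, map_mul, lift_hkGen] at ha
    exact ha
  have hle : f i (lift hf q a) ≤ a := (hf.le_lift_apply hinfl p _).trans_eq ha
  have hq : lift hf q a = a := le_antisymm ((hinfl i _).trans hle) (hf.le_lift_apply hinfl q a)
  rw [hq] at hle
  exact le_antisymm hle (hinfl i a)

end inflationary

theorem acyclicOn_support (hsimple : ∀ i j : Fin n, E i j → i ≠ j ∧ ¬ E j i) {m : HKmonoid E}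
    (hm : IsIdempotentElem m) : AcyclicOn E (support m) := by
  have hf := isHKFamily_raise hsimple
  set a := lift hf m 0
  have ha : lift hf m a = a := by
    change (lift hf m * lift hf m) 0 = a
    rw [← map_mul, hm.eq]
  refine acyclicOn_of_lt a fun i hi s _ hE => ?_
  have hfix := congrFun (hf.apply_eq_of_mem_support le_raise ha hi) i
  rw [raise_apply_self] at hfix
  exact (lt_succSup hE).trans_le (hfix ▸ le_max_right _ _)

end HKmonoid

/-- for a finite simple oriented graph, the idempotents of `HK_Γ` are in
bijection with the induced subgraphs of `Γ` (given by their vertex sets) containing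
no oriented cycle. -/
theorem hk_idempotents_equiv_acyclic_subgraphs {n : ℕ} (E : Fin n → Fin n → Prop)
    (hsimple : ∀ i j : Fin n, E i j → i ≠ j ∧ ¬ E j i) :
    Nonempty
      ({m : HKmonoid E // IsIdempotentElem m} ≃
        {V : Finset (Fin n) //
          ∀ v : Fin n, ¬ Relation.TransGen (fun a b => a ∈ V ∧ b ∈ V ∧ E a b) v v}) := by
  have hirr : ∀ i, ¬ E i i := fun i h => (hsimple i i h).1 rfl
  refine ⟨.ofBijective (fun m => ⟨HKmonoid.support m.1, HKmonoid.acyclicOn_support hsimple m.2⟩)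
    ⟨fun ⟨m, hm⟩ ⟨m', hm'⟩ h => ?_, fun ⟨V, hV⟩ => ?_⟩⟩
  · obtain ⟨l, hnodup, hl, hsupp⟩ := (HKmonoid.acyclicOn_support hsimple hm).exists_sorted_list
    have hsupp' : HKmonoid.support m' = l.toFinset := (congrArg Subtype.val h).symm.trans hsupp.symm
    refine Subtype.ext (?_ : m = m')
    rw [HKmonoid.eq_word_of_isIdempotentElem hirr hnodup hl hm hsupp.symm,
      HKmonoid.eq_word_of_isIdempotentElem hirr hnodup hl hm' hsupp']
  · obtain ⟨l, -, hl, rfl⟩ := AcyclicOn.exists_sorted_list hV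
    exact ⟨⟨_, HKmonoid.isIdempotentElem_word hl⟩, Subtype.ext (HKmonoid.support_word l)⟩
end

section
/- Let $f : C_n \to \mathrm{Map}(\mathbb{Z}^n, \mathbb{Z}^n)$ be the monoid homomorphism defined on generators by $f(x_i)(m_1,\ldots,m_n) = (m_1,\ldots,m_{i-1}, m_{i+1}, m_{i+1}, \ldots, m_n)$ for $i \neq n$, and $f(x_n)(m_1,\ldots,m_n) = (m_1,\ldots,m_{n-1}, m_1+1)$. Assume $w = x_{i_1}\cdots x_{i_k} \in C_n$ is a word such that for all $j < l$ either $0 < i_l - i_j < n-1$ or $i_j - i_l \geq 2$. Then the support of $f(w)$ equals $\{1,\ldots,n\} \setminus \{i_1,\ldots,i_k\}$. -/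
/-- The arrow relation of the oriented cycle `0 → 1 → ⋯ → n-1 → 0` on `Fin n`. -/
def cycleRel (n : ℕ) [NeZero n] : Fin n → Fin n → Prop := fun i j => j = i + 1

/-- The Hecke–Kiselman monoid of the oriented cycle of length `n`. -/
def Cmonoid (n : ℕ) [NeZero n] : Type := HKmonoid (cycleRel n)

instance (n : ℕ) [NeZero n] : Monoid (Cmonoid n) :=
  inferInstanceAs (Monoid (HKmonoid (cycleRel n)))

/-- The generators `x_i` of `C_n`. -/
def cGen (n : ℕ) [NeZero n] (i : Fin n) : Cmonoid n := hkGen (cycleRel n) i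

/-- The map `f(x_i) : ℤⁿ → ℤⁿ`: it replaces the `i`-th coordinate by `m_{i+1}`
(for `i ≠ n`), and `f(x_n)` replaces the `n`-th coordinate by `m_1 + 1`
(indices of the paper are `1,…,n`, here `0,…,n-1`). -/
def cycF (n : ℕ) [NeZero n] (i : Fin n) : (Fin n → ℤ) → (Fin n → ℤ) := fun m =>
  Function.update m i (m (i + 1) + if i.val + 1 = n then 1 else 0)

/-- The image `f(w)` of a word `w = x_{i_1} ⋯ x_{i_k}`, namely
`f(x_{i_1}) ∘ ⋯ ∘ f(x_{i_k})`. -/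
def cycFWord (n : ℕ) [NeZero n] (l : List (Fin n)) : (Fin n → ℤ) → (Fin n → ℤ) :=
  (l.map (cycF n)).foldr (· ∘ ·) id

/-- The support of a map `g : ℤⁿ → ℤⁿ`: the set of coordinates on which `g`
depends essentially. -/
def essSupp (n : ℕ) (g : (Fin n → ℤ) → (Fin n → ℤ)) : Set (Fin n) :=
  {j | ∃ m m' : Fin n → ℤ, (∀ k, k ≠ j → m k = m' k) ∧ g m ≠ g m'}

/-
Each `f(x_i)` is a substitution of coordinates followed by a translation, `m ↦ m ∘ τ + γ`, and
such maps are closed under composition; the support of `m ↦ m ∘ τ + γ` is the range of `τ`.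
The condition says that no letter of `w` equals a later letter `a` or `a + 1`. Appending letters
on the right one at a time, it follows that the substitution `τ` of `f(w)` fixes every coordinate
not in `w` and takes values outside `w`; its range is therefore exactly the complement of `w`.
-/

open Function

def substAdd {ι R : Type*} [Add R] (τ : ι → ι) (γ : ι → R) (m : ι → R) : ι → R :=
  m ∘ τ + γ

lemma substAdd_comp_substAdd {ι R : Type*} [AddSemigroup R] (τ σ : ι → ι)
    (γ δ : ι → R) :
    substAdd τ γ ∘ substAdd σ δ = substAdd (σ ∘ τ) (δ ∘ τ + γ) := by
  funext m i
  simp only [substAdd, comp_apply, Pi.add_apply, add_assoc]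

lemma essSupp_substAdd {n : ℕ} (τ : Fin n → Fin n) (γ : Fin n → ℤ) :
    essSupp n (substAdd τ γ) = Set.range τ := by
  ext j
  constructor
  · rintro ⟨m, m', hmm', hne⟩
    by_contra hj
    exact hne (funext fun k => by simp [substAdd, hmm' (τ k) fun h => hj ⟨k, h⟩])
  · rintro ⟨k, rfl⟩
    refine ⟨0, Pi.single (τ k) 1, fun i hi => by simp [hi], fun h => ?_⟩
    simpa [substAdd] using congrFun h k

section CycleWord

variable {n : ℕ} [NeZero n]

lemma Fin.val_add_one_eq_ite (i : Fin n) :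
    ((i + 1 : Fin n) : ℕ) = if i.val + 1 = n then 0 else i.val + 1 := by
  rw [Fin.val_add, Fin.val_one', Nat.add_mod_mod]
  split_ifs with h
  · simp [h]
  · exact Nat.mod_eq_of_lt (by omega)

lemma cycF_eq_substAdd (i : Fin n) :
    cycF n i = substAdd (update id i (i + 1)) (Pi.single i (if i.val + 1 = n then 1 else 0)) := by
  funext m j
  by_cases h : j = i
  · subst h; simp [cycF, substAdd]
  · simp [cycF, substAdd, h]

lemma cycFWord_append (l₁ l₂ : List (Fin n)) :
    cycFWord n (l₁ ++ l₂) = cycFWord n l₁ ∘ cycFWord n l₂ := by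
  induction l₁ with
  | nil => rfl
  | cons a l ih =>
    simp only [cycFWord, List.cons_append, List.map_cons, List.foldr_cons] at ih ⊢
    rw [ih, comp_assoc]

lemma cycFWord_eq_substAdd (hn : 1 < n) (l : List (Fin n))
    (hl : l.Pairwise fun x y => x ≠ y ∧ x ≠ y + 1) :
    ∃ τ : Fin n → Fin n, ∃ γ : Fin n → ℤ,
      (∀ j ∉ l, τ j = j) ∧ (∀ j, τ j ∉ l) ∧ cycFWord n l = substAdd τ γ := by
  induction l using List.reverseRecOn with
  | nil =>
    refine ⟨id, 0, fun _ _ => rfl, fun _ => List.not_mem_nil, ?_⟩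
    funext m
    simp [cycFWord, substAdd]
  | append_singleton l a ih =>
    obtain ⟨hl, -, hla⟩ := List.pairwise_append.1 hl
    obtain ⟨τ, γ, hfix, hmaps, hw⟩ := ih hl
    have ha1 : a + 1 ∉ l := fun h => (hla _ h a (List.mem_singleton_self a)).2 rfl
    have ha1a : a + 1 ≠ a := fun h => by
      have := congrArg Fin.val h
      rw [Fin.val_add_one_eq_ite] at this
      split_ifs at this <;> omega
    refine ⟨update id a (a + 1) ∘ τ, Pi.single a (if a.val + 1 = n then 1 else 0) ∘ τ + γ,
      fun j hj => ?_, fun j => ?_, ?_⟩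
    · simp only [List.mem_append, List.mem_singleton, not_or] at hj
      simp [hfix j hj.1, update_of_ne hj.2]
    · simp only [List.mem_append, List.mem_singleton, not_or, comp_apply]
      by_cases h : τ j = a
      · simp [h, ha1, ha1a]
      · simp [hmaps j, h]
    · rw [cycFWord_append, hw, show cycFWord n [a] = cycF n a from rfl, cycF_eq_substAdd,
        substAdd_comp_substAdd]

lemma ne_and_ne_add_one_of_cycle_cond {x y : Fin n}
    (h : ((0 : ℤ) < (y.val : ℤ) - x.val ∧ (y.val : ℤ) - x.val < (n : ℤ) - 1) ∨
      (x.val : ℤ) - y.val ≥ 2) :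
    x ≠ y ∧ x ≠ y + 1 := by
  have := y.is_lt
  constructor <;> rintro rfl
  · omega
  · rw [Fin.val_add_one_eq_ite] at h
    split_ifs at h <;> omega

end CycleWord

/-- if the word `w = x_{i_1} ⋯ x_{i_k}` satisfies the condition that for
all `j < l` either `0 < i_l - i_j < n - 1` or `i_j - i_l ≥ 2`, then
`supp f(w) = {1,…,n} \ {i_1,…,i_k}`. -/
theorem essSupp_cycFWord (n : ℕ) [NeZero n] (hn : 3 ≤ n) (l : List (Fin n))
    (hcond : ∀ p q : Fin l.length, p < q →
      ((0 : ℤ) < ((l.get q).val : ℤ) - ((l.get p).val : ℤ) ∧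
        ((l.get q).val : ℤ) - ((l.get p).val : ℤ) < (n : ℤ) - 1) ∨
      ((l.get p).val : ℤ) - ((l.get q).val : ℤ) ≥ 2) :
    essSupp n (cycFWord n l) = {j : Fin n | j ∉ l} := by
  have hl : l.Pairwise fun x y => x ≠ y ∧ x ≠ y + 1 :=
    List.pairwise_iff_get.2 fun p q hpq => ne_and_ne_add_one_of_cycle_cond (hcond p q hpq)
  obtain ⟨τ, γ, hfix, hmaps, hw⟩ := cycFWord_eq_substAdd (by omega) l hl
  rw [hw, essSupp_substAdd]
  ext j
  exact ⟨by rintro ⟨k, rfl⟩; exact hmaps k, fun hj => ⟨j, hfix j hj⟩⟩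
end

section
/- The monoid homomorphism $f : C_n \to \mathrm{Map}(\mathbb{Z}^n, \mathbb{Z}^n)$ given on generators by $f(x_i)(m_1,\ldots,m_n) = (m_1,\ldots,m_{i-1}, m_{i+1}, m_{i+1}, \ldots, m_n)$ for $i \neq n$ and $f(x_n)(m_1,\ldots,m_n) = (m_1,\ldots,m_{n-1}, m_1+1)$ is well defined, i.e., the maps $f(x_i)$ satisfy the defining relations of $C_n$: each $f(x_i)$ is idempotent, $f(x_i)$ and $f(x_j)$ commute when $i,j$ are non-adjacent vertices of the cycle, and $f(x_i)f(x_{i+1})f(x_i) = f(x_{i+1})f(x_i)f(x_{i+1}) = f(x_i)f(x_{i+1})$ for arrows $i \to i+1$ (mod $n$). -/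
/-!
Each `f(x_i)` overwrites one coordinate with a function of the next one,
`m ↦ update m i (φ (m (i + 1)))`. For such "assignment" maps the Hecke–Kiselman
relations hold as soon as the indices involved are distinct: two assignments touching
disjoint coordinates commute, and for an arrow `i → j → k` of distinct indices, both
`x_i x_j x_i` and `x_j x_i x_j` end with coordinates `j ↦ ψ m_k`, `i ↦ φ (ψ m_k)`,
exactly as `x_i x_j` does. On the cycle, `i`, `i + 1`, `i + 2` are distinct because
`n ≥ 3`, and a map satisfying the defining relations factors through `C_n`.
-/

def assignFrom {ι α : Type*} [DecidableEq ι] (i j : ι) (φ : α → α) :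
    (ι → α) → (ι → α) :=
  fun m => Function.update m i (φ (m j))

section assignFrom

variable {ι α : Type*} [DecidableEq ι]

theorem assignFrom_idem {i j : ι} (hij : j ≠ i) (φ : α → α) :
    assignFrom i j φ ∘ assignFrom i j φ = assignFrom i j φ := by
  funext m
  simp only [Function.comp_apply, assignFrom, Function.update_of_ne hij,
    Function.update_idem]

theorem assignFrom_comm {i j k l : ι} (hik : i ≠ k) (hli : l ≠ i) (hjk : j ≠ k)
    (φ ψ : α → α) :
    assignFrom i j φ ∘ assignFrom k l ψ = assignFrom k l ψ ∘ assignFrom i j φ := by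
  funext m
  simp only [Function.comp_apply, assignFrom, Function.update_of_ne hli,
    Function.update_of_ne hjk]
  exact (Function.update_comm hik _ _ m).symm

theorem assignFrom_braid_left {i j k : ι} (hji : j ≠ i) (hki : k ≠ i) (φ ψ : α → α) :
    assignFrom i j φ ∘ assignFrom j k ψ ∘ assignFrom i j φ =
      assignFrom i j φ ∘ assignFrom j k ψ := by
  funext m
  simp only [Function.comp_apply, assignFrom, Function.update_self, Function.update_of_ne hki]
  rw [Function.update_comm hji.symm, Function.update_idem]

theorem assignFrom_braid_right {i j k : ι} (hji : j ≠ i) (hki : k ≠ i) (hkj : k ≠ j)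
    (φ ψ : α → α) :
    assignFrom j k ψ ∘ assignFrom i j φ ∘ assignFrom j k ψ =
      assignFrom i j φ ∘ assignFrom j k ψ := by
  funext m
  simp only [Function.comp_apply, assignFrom, Function.update_self,
    Function.update_of_ne hki, Function.update_of_ne hkj]
  rw [Function.update_comm hji, Function.update_idem]

end assignFrom

theorem Fin.add_one_ne_self {n : ℕ} [NeZero n] (hn : 1 < n) (i : Fin n) : i + 1 ≠ i :=
  add_ne_left.mpr fun h => by simp only [Fin.one_eq_zero_iff] at h; omega

theorem Fin.add_one_add_one_ne_self {n : ℕ} [NeZero n] (hn : 2 < n) (i : Fin n) :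
    i + 1 + 1 ≠ i := by
  rw [add_assoc, Ne, add_eq_left, Fin.ext_iff, Fin.val_add, Fin.val_one', Fin.val_zero,
    Nat.mod_eq_of_lt (by omega : 1 < n), Nat.mod_eq_of_lt hn]
  omega

theorem HKmonoid.exists_hom_hkGen {n : ℕ} {E : Fin n → Fin n → Prop} {M : Type*}
    [Monoid M] (g : Fin n → M) (idem : ∀ i, g i * g i = g i)
    (comm : ∀ i j, i ≠ j → ¬ E i j → ¬ E j i → g i * g j = g j * g i)
    (braid : ∀ i j, E i j → g i * g j * g i = g i * g j ∧ g j * g i * g j = g i * g j) :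
    ∃ f : HKmonoid E →* M, ∀ i, f (hkGen E i) = g i := by
  have hker : conGen (hkRel E) ≤ Con.ker (FreeMonoid.lift g) := by
    refine Con.conGen_le.mpr ?_
    rintro w₁ w₂ (⟨i, rfl, rfl⟩ | ⟨i, j, hij, hEij, hEji, rfl, rfl⟩ |
      ⟨i, j, hE, ⟨rfl, rfl⟩ | ⟨rfl, rfl⟩⟩) <;>
    simp only [Con.ker_rel, map_mul, FreeMonoid.lift_eval_of]
    exacts [idem i, comm i j hij hEij hEji, (braid i j hE).1, (braid i j hE).2]
  exact ⟨(conGen (hkRel E)).lift _ hker, fun i =>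
    (Con.lift_mk' hker _).trans (FreeMonoid.lift_eval_of g i)⟩

theorem cycF_eq_assignFrom (n : ℕ) [NeZero n] (i : Fin n) :
    cycF n i = assignFrom i (i + 1) (· + if i.val + 1 = n then 1 else 0) :=
  rfl

/-- the maps `f(x_i)` satisfy the defining relations of `C_n`, so `f`
is a well-defined monoid homomorphism `C_n → Map(ℤⁿ, ℤⁿ)`. -/
theorem cycF_well_defined (n : ℕ) [NeZero n] (hn : 3 ≤ n) :
    (∀ i : Fin n, cycF n i ∘ cycF n i = cycF n i) ∧
    (∀ i j : Fin n, i ≠ j → j ≠ i + 1 → i ≠ j + 1 →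
      cycF n i ∘ cycF n j = cycF n j ∘ cycF n i) ∧
    (∀ i : Fin n,
      cycF n i ∘ cycF n (i + 1) ∘ cycF n i =
        cycF n (i + 1) ∘ cycF n i ∘ cycF n (i + 1) ∧
      cycF n (i + 1) ∘ cycF n i ∘ cycF n (i + 1) = cycF n i ∘ cycF n (i + 1)) ∧
    ∃ f : Cmonoid n →* Function.End (Fin n → ℤ),
      ∀ i : Fin n, f (cGen n i) = cycF n i := by
  have idem (i : Fin n) : cycF n i ∘ cycF n i = cycF n i := by
    simp only [cycF_eq_assignFrom]
    exact assignFrom_idem (Fin.add_one_ne_self (by omega) i) _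
  have comm (i j : Fin n) (hij : i ≠ j) (hj : j ≠ i + 1) (hi : i ≠ j + 1) :
      cycF n i ∘ cycF n j = cycF n j ∘ cycF n i := by
    simp only [cycF_eq_assignFrom]
    exact assignFrom_comm hij hi.symm hj.symm _ _
  have braid (i : Fin n) :
      cycF n i ∘ cycF n (i + 1) ∘ cycF n i = cycF n i ∘ cycF n (i + 1) ∧
      cycF n (i + 1) ∘ cycF n i ∘ cycF n (i + 1) = cycF n i ∘ cycF n (i + 1) := by
    have h₁ := Fin.add_one_ne_self (by omega) i
    have h₂ := Fin.add_one_add_one_ne_self (by omega) i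
    have h₃ := Fin.add_one_ne_self (by omega) (i + 1)
    simp only [cycF_eq_assignFrom]
    exact ⟨assignFrom_braid_left h₁ h₂ _ _, assignFrom_braid_right h₁ h₂ h₃ _ _⟩
  refine ⟨idem, comm, fun i => ⟨(braid i).1.trans (braid i).2.symm, (braid i).2⟩, ?_⟩
  exact HKmonoid.exists_hom_hkGen (M := Function.End (Fin n → ℤ)) (cycF n) idem comm
    fun i j hE => hE ▸ braid i
end

section
/- In the Hecke–Kiselman monoid $C_3$, the element $x_1 x_2 x_3$ generates an infinite cyclic subsemigroup; in particular, $C_3$ is infinite. -/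
/-!
`C_n` acts on `ℤ` for `n ≥ 3`: the generator `x_i` lowers by one every integer congruent to `i`
modulo `n` and fixes the others. The defining relations of `C_n` hold for these maps because
`1` and `2` are nonzero modulo `n`. The product `x₀ x₁ x₂` lowers every integer congruent to `2`
modulo `3` by `3`, so its powers move `-1` to pairwise different integers.
-/

section StepDown

variable {R : Type*} [CommRing R] [DecidableEq R]

def stepDown (a : R) (x : ℤ) : ℤ := if (x : R) = a then x - 1 else x

lemma stepDown_idem [Nontrivial R] (a : R) : stepDown a ∘ stepDown a = stepDown a := by
  funext x
  simp only [Function.comp_apply, stepDown]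
  split_ifs <;> push_cast at * <;> simp_all

lemma stepDown_comm {a b : R} (hab : b ≠ a + 1) (hba : a ≠ b + 1) :
    stepDown a ∘ stepDown b = stepDown b ∘ stepDown a := by
  funext x
  simp only [Function.comp_apply, stepDown]
  split_ifs <;> push_cast at * <;> simp_all [sub_eq_iff_eq_add]

lemma stepDown_braid_left (h2 : (2 : R) ≠ 0) (a : R) :
    stepDown a ∘ stepDown (a + 1) ∘ stepDown a = stepDown a ∘ stepDown (a + 1) := by
  have : Nontrivial R := ⟨⟨2, 0, h2⟩⟩
  funext x
  simp only [Function.comp_apply, stepDown]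
  split_ifs <;> push_cast at * <;> simp_all [sub_eq_iff_eq_add, add_assoc, one_add_one_eq_two]

lemma stepDown_braid_right (h2 : (2 : R) ≠ 0) (a : R) :
    stepDown (a + 1) ∘ stepDown a ∘ stepDown (a + 1) = stepDown a ∘ stepDown (a + 1) := by
  funext x
  simp only [Function.comp_apply, stepDown]
  split_ifs <;> push_cast at * <;> simp_all [sub_eq_iff_eq_add, add_assoc, one_add_one_eq_two]

lemma stepDown_of_eq {a : R} {x : ℤ} (h : (x : R) = a) : stepDown a x = x - 1 := if_pos h

end StepDown

lemma Function.End.mul_apply {α : Type*} (f g : Function.End α) (x : α) : (f * g) x = f (g x) :=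
  rfl

lemma ZMod.two_ne_zero_of_three_le {n : ℕ} (hn : 3 ≤ n) : (2 : ZMod n) ≠ 0 := by
  rw [← Nat.cast_ofNat, Ne, ZMod.natCast_eq_zero_iff]
  exact fun h => absurd (Nat.le_of_dvd two_pos h) (by omega)

namespace Cmonoid

variable {n : ℕ} [NeZero n]

lemma cycleRel_iff_finEquiv {i j : Fin n} :
    cycleRel n i j ↔ ZMod.finEquiv n j = ZMod.finEquiv n i + 1 := by
  rw [cycleRel, ← (ZMod.finEquiv n).injective.eq_iff, map_add, map_one]

def freeToEnd (n : ℕ) [NeZero n] : FreeMonoid (Fin n) →* Function.End ℤ :=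
  FreeMonoid.lift fun i => stepDown (ZMod.finEquiv n i)

lemma freeToEnd_of (i : Fin n) : freeToEnd n (FreeMonoid.of i) = stepDown (ZMod.finEquiv n i) :=
  FreeMonoid.lift_eval_of _ _

lemma hkRel_le_ker_freeToEnd (hn : 3 ≤ n) : hkRel (cycleRel n) ≤ Con.ker (freeToEnd n) := by
  have h2 := ZMod.two_ne_zero_of_three_le hn
  have : Nontrivial (ZMod n) := ⟨⟨2, 0, h2⟩⟩
  rintro u v (⟨i, rfl, rfl⟩ | ⟨i, j, -, hij, hji, rfl, rfl⟩ | ⟨i, j, hij, (⟨rfl, rfl⟩ | ⟨rfl, rfl⟩)⟩)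
  all_goals simp only [Con.ker_rel, map_mul, freeToEnd_of]
  · exact stepDown_idem _
  · exact stepDown_comm (mt cycleRel_iff_finEquiv.mpr hij) (mt cycleRel_iff_finEquiv.mpr hji)
  · rw [cycleRel_iff_finEquiv.mp hij]
    exact stepDown_braid_left h2 _
  · rw [cycleRel_iff_finEquiv.mp hij]
    exact stepDown_braid_right h2 _

def toEnd (hn : 3 ≤ n) : Cmonoid n →* Function.End ℤ :=
  Con.lift _ (freeToEnd n) (Con.conGen_le.mpr (hkRel_le_ker_freeToEnd hn))

lemma toEnd_cGen (hn : 3 ≤ n) (i : Fin n) :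
    toEnd hn (cGen n i) = stepDown (ZMod.finEquiv n i) :=
  Con.lift_mk' _ _

lemma toEnd_c3Word {x : ℤ} (hx : (x : ZMod 3) = 2) :
    toEnd le_rfl (cGen 3 0 * cGen 3 1 * cGen 3 2) x = x - 3 := by
  rw [map_mul, map_mul, Function.End.mul_apply, Function.End.mul_apply, toEnd_cGen, toEnd_cGen,
    toEnd_cGen]
  change stepDown 0 (stepDown 1 (stepDown 2 x)) = x - 3
  have hx1 : ((x - 1 : ℤ) : ZMod 3) = 1 := by push_cast; rw [hx]; decide
  have hx2 : ((x - 1 - 1 : ℤ) : ZMod 3) = 0 := by push_cast; rw [hx]; decide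
  rw [stepDown_of_eq hx, stepDown_of_eq hx1, stepDown_of_eq hx2]
  ring

lemma toEnd_c3Word_pow (k : ℕ) :
    toEnd le_rfl ((cGen 3 0 * cGen 3 1 * cGen 3 2) ^ k) (-1) = -3 * k - 1 := by
  induction k with
  | zero => rfl
  | succ k ih =>
    have hk : ((-3 * k - 1 : ℤ) : ZMod 3) = 2 := by
      push_cast
      rw [show (3 : ZMod 3) = 0 from rfl]
      ring_nf
      decide
    rw [pow_succ', map_mul, Function.End.mul_apply, ih, toEnd_c3Word hk]
    push_cast
    ring

lemma c3Word_pow_injective :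
    Function.Injective fun k : ℕ => (cGen 3 0 * cGen 3 1 * cGen 3 2) ^ k := by
  intro k l hkl
  have h := congrArg (fun g => toEnd le_rfl g (-1)) hkl
  simp only [toEnd_c3Word_pow] at h
  omega

end Cmonoid

/-- in `C_3`, the element `x₁x₂x₃` generates an infinite cyclic
subsemigroup (its positive powers are pairwise distinct); in particular `C_3`
is infinite. -/
theorem c3_infinite_cyclic :
    Function.Injective (fun k : ℕ => (cGen 3 0 * cGen 3 1 * cGen 3 2) ^ (k + 1)) ∧
    Infinite (Cmonoid 3) := by
  have hinj := Cmonoid.c3Word_pow_injective.comp (add_left_injective 1)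
  exact ⟨hinj, Infinite.of_injective _ hinj⟩
end
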